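/- Attention mass concentration after token removal: if the attention logit vector restricted to a context missing token q still has z_p ≥ 0 and z_i ≤ −2 log M for i ≠ p, then the softmax mass on p satisfies s_p ≥ 1 − 1/M, so the normalized aggregated representation LN(X^T b) satisfies ⟨LN(X^T b), e_p⟩ ≥ 1 − 2/M for M ≥ 4, given the context rows are distinct one-hot vectors. -/
import Mathlib


/-- Attention mass concentration after removal of the context token: if the
attention logit at the position `ip` of token `p` satisfies `z ip ≥ 0` and every other
logit is at most `−2 log M` (with `T − 1 ≤ M`, `M ≥ 4`), then the softmax mass satisfies
`b ip ≥ 1 − 1/M`; moreover with `X` having distinct one-hot rows (row `i` is `e_{e i}`),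
the aggregated vector `v = Xᵀ b` satisfies `v (e ip) = b ip` and `‖v‖ ≤ 1`, so the
normalized representation satisfies `⟨LN(v), e_p⟩ = v (e ip)/‖v‖ ≥ 1 − 1/M ≥ 1 − 2/M`. -/
theorem stmt17 (n M : ℕ) (hM : 4 ≤ M) (hnM : n ≤ M)
    (z : Fin n → ℝ) (ip : Fin n) (hzp : 0 ≤ z ip)
    (hz : ∀ i : Fin n, i ≠ ip → z i ≤ -(2 * Real.log M))
    (b : Fin n → ℝ) (hb : ∀ i, b i = Real.exp (z i) / ∑ j, Real.exp (z j))
    (e : Fin n → Fin M) (he : Function.Injective e)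
    (X : Matrix (Fin n) (Fin M) ℝ) (hX : ∀ i j, X i j = if j = e i then 1 else 0) :
    1 - 1 / (M : ℝ) ≤ b ip ∧
      Matrix.mulVec (Matrix.transpose X) b (e ip) = b ip ∧
      Real.sqrt (∑ j, (Matrix.mulVec (Matrix.transpose X) b j) ^ 2) ≤ 1 ∧
      1 - 2 / (M : ℝ) ≤
        Matrix.mulVec (Matrix.transpose X) b (e ip) /
          Real.sqrt (∑ j, (Matrix.mulVec (Matrix.transpose X) b j) ^ 2) := by
  have hM0 : (0:ℝ) < M := by
    have : (4:ℝ) ≤ M := by exact_mod_cast hM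
    linarith
  set S := ∑ j, Real.exp (z j) with hSdef
  have hSpos : 0 < S := Finset.sum_pos (fun j _ => Real.exp_pos _) ⟨ip, Finset.mem_univ ip⟩
  have hE1 : 1 ≤ Real.exp (z ip) := Real.one_le_exp hzp
  -- tail bound
  have hexp2 : Real.exp (-(2 * Real.log M)) = 1 / (M:ℝ)^2 := by
    rw [Real.exp_neg]
    rw [show (2 : ℝ) * Real.log M = Real.log ((M:ℝ)^2) by
      rw [Real.log_pow]; push_cast; ring]
    rw [Real.exp_log (by positivity)]
    rw [inv_eq_one_div]
  have htail : ∑ j ∈ Finset.univ.erase ip, Real.exp (z j) ≤ 1 / (M:ℝ) := by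
    have h1 : ∑ j ∈ Finset.univ.erase ip, Real.exp (z j)
        ≤ ∑ _j ∈ Finset.univ.erase ip, (1 / (M:ℝ)^2) := by
      apply Finset.sum_le_sum
      intro j hj
      have hj' := Finset.ne_of_mem_erase hj
      calc Real.exp (z j) ≤ Real.exp (-(2 * Real.log M)) := Real.exp_le_exp.2 (hz j hj')
        _ = 1 / (M:ℝ)^2 := hexp2
    have hcard : ((Finset.univ.erase ip).card : ℝ) ≤ (M : ℝ) := by
      have : (Finset.univ.erase ip).card ≤ n := by
        calc (Finset.univ.erase ip).card ≤ (Finset.univ : Finset (Fin n)).card := Finset.card_le_card (Finset.erase_subset _ _)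
          _ = n := by simp
      exact_mod_cast this.trans hnM
    calc ∑ j ∈ Finset.univ.erase ip, Real.exp (z j)
        ≤ ∑ _j ∈ Finset.univ.erase ip, (1 / (M:ℝ)^2) := h1
      _ = ((Finset.univ.erase ip).card : ℝ) * (1 / (M:ℝ)^2) := by
          rw [Finset.sum_const, nsmul_eq_mul]
      _ ≤ (M:ℝ) * (1 / (M:ℝ)^2) := by
          apply mul_le_mul_of_nonneg_right hcard (by positivity)
      _ = 1 / (M:ℝ) := by field_simp
  have hSsplit : S = Real.exp (z ip) + ∑ j ∈ Finset.univ.erase ip, Real.exp (z j) :=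
    (Finset.add_sum_erase _ _ (Finset.mem_univ ip)).symm
  have hTnn : 0 ≤ ∑ j ∈ Finset.univ.erase ip, Real.exp (z j) :=
    Finset.sum_nonneg fun j _ => (Real.exp_pos _).le
  have hbip : 1 - 1 / (M:ℝ) ≤ b ip := by
    rw [hb ip, le_div_iff₀ hSpos]
    set T := ∑ j ∈ Finset.univ.erase ip, Real.exp (z j)
    have hM4 : (4:ℝ) ≤ M := by exact_mod_cast hM
    rw [hSsplit]
    have h1M : 1 / (M:ℝ) ≤ Real.exp (z ip) / (M:ℝ) := by
      gcongr
    have : (1 - 1/(M:ℝ)) * (Real.exp (z ip) + T)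
        = Real.exp (z ip) + T - Real.exp (z ip)/(M:ℝ) - T/(M:ℝ) := by ring
    rw [this]
    have hT1 : T / (M:ℝ) ≥ 0 := by positivity
    nlinarith [htail, h1M]
  -- softmax sums to 1, entries nonneg and ≤ 1
  have hbnn : ∀ i, 0 ≤ b i := by
    intro i; rw [hb i]; positivity
  have hbsum : ∑ i, b i = 1 := by
    simp only [hb]
    rw [← Finset.sum_div, ← hSdef, div_self hSpos.ne']
  have hble : ∀ i, b i ≤ 1 := by
    intro i
    rw [← hbsum]
    exact Finset.single_le_sum (fun j _ => hbnn j) (Finset.mem_univ i)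
  -- the aggregated vector
  have hv : ∀ j, Matrix.mulVec (Matrix.transpose X) b j = ∑ i, (if j = e i then b i else 0) := by
    intro j
    simp only [Matrix.mulVec, dotProduct, Matrix.transpose_apply, hX, ite_mul, one_mul,
      zero_mul]
  have hvei : ∀ i0, Matrix.mulVec (Matrix.transpose X) b (e i0) = b i0 := by
    intro i0
    rw [hv]
    have : ∀ i, (if e i0 = e i then b i else 0) = if i0 = i then b i else 0 := by
      intro i
      congr 1
      simp [he.eq_iff]
    simp only [this]
    simp
  have hvzero : ∀ j, j ∉ Finset.image e Finset.univ →
      Matrix.mulVec (Matrix.transpose X) b j = 0 := by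
    intro j hj
    rw [hv]
    apply Finset.sum_eq_zero
    intro i _
    rw [if_neg]
    intro h
    exact hj (Finset.mem_image.2 ⟨i, Finset.mem_univ i, h.symm⟩)
  have hsq : ∑ j, (Matrix.mulVec (Matrix.transpose X) b j) ^ 2 = ∑ i, (b i)^2 := by
    rw [← Finset.sum_subset (Finset.subset_univ (Finset.image e Finset.univ))
      (fun j _ hj => by rw [hvzero j hj]; ring)]
    rw [Finset.sum_image (fun a _ c _ h => he h)]
    exact Finset.sum_congr rfl fun i _ => by rw [hvei]
  have hQle : ∑ j, (Matrix.mulVec (Matrix.transpose X) b j) ^ 2 ≤ 1 := by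
    rw [hsq, ← hbsum]
    apply Finset.sum_le_sum
    intro i _
    nlinarith [hbnn i, hble i]
  have hQnn : 0 ≤ ∑ j, (Matrix.mulVec (Matrix.transpose X) b j) ^ 2 :=
    Finset.sum_nonneg fun j _ => sq_nonneg _
  have hbipPos : 0 < b ip := by
    have : (4:ℝ) ≤ M := by exact_mod_cast hM
    have h1M : 1 / (M:ℝ) ≤ 1/4 := by
      apply div_le_div_of_nonneg_left (by norm_num) (by norm_num) this
    linarith
  have hQpos : 0 < ∑ j, (Matrix.mulVec (Matrix.transpose X) b j) ^ 2 := by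
    rw [hsq]
    exact Finset.sum_pos' (fun i _ => sq_nonneg _) ⟨ip, Finset.mem_univ ip, by positivity⟩
  have hsqrtle : Real.sqrt (∑ j, (Matrix.mulVec (Matrix.transpose X) b j) ^ 2) ≤ 1 :=
    Real.sqrt_le_one.2 hQle
  have hsqrtpos : 0 < Real.sqrt (∑ j, (Matrix.mulVec (Matrix.transpose X) b j) ^ 2) :=
    Real.sqrt_pos.2 hQpos
  refine ⟨hbip, hvei ip, hsqrtle, ?_⟩
  rw [hvei ip]
  have hdiv : b ip ≤ b ip / Real.sqrt (∑ j, (Matrix.mulVec (Matrix.transpose X) b j) ^ 2) := by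
    rw [le_div_iff₀ hsqrtpos]
    nlinarith [hbipPos.le, hsqrtle, hsqrtpos.le]
  have h2M : 1 - 2/(M:ℝ) ≤ 1 - 1/(M:ℝ) := by
    have : 1/(M:ℝ) ≤ 2/(M:ℝ) := by
      gcongr
      norm_num
    linarith
  linarith
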